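/- Let φ: A → B be a ring homomorphism between commutative rings, with B reduced Noetherian having minimal primes p_1, ..., p_k, and suppose B is integrally closed in its total ring of fractions. If the conductor C of A in its integral closure Ā (taken in the total fraction ring of A) is not contained in φ^{-1}(p_i) for any i, then φ extends uniquely to a ring homomorphism φ̄: Ā → B. -/

import Mathlib

/-!
Prime avoidance gives `g` in the conductor with `φ g` outside every minimal prime of `B`; as `B`
is reduced, `φ g` is a nonzerodivisor, hence a unit of `tot B`. Because `g • Ā ⊆ A`, the map
`h ↦ φ (g * h) / φ g` is a ring homomorphism `Ā → tot B` extending `φ`; its values are integral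
over `B`, so they lie in `B`. Any extension `ψ` satisfies `φ g * ψ h = φ (g * h)`, and `φ g` can be
cancelled, which gives uniqueness.
-/

open Function nonZeroDivisors

section

universe u v w x y

variable {A : Type u} {B : Type v} {S : Type w} {L : Type x} {K : Type y}
  [CommRing A] [CommRing B] [CommRing S] [CommRing L] [CommRing K]

def Subalgebra.conductor [Algebra A K] (T : Subalgebra A K) : Ideal A :=
  (⊥ : Subalgebra A K).toSubmodule.colon (T : Set K)

theorem Subalgebra.mem_conductor_iff [Algebra A K] {T : Subalgebra A K} {g : A} :
    g ∈ T.conductor ↔ ∀ h ∈ T, ∃ a : A, algebraMap A K a = algebraMap A K g * h := by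
  simp only [Subalgebra.conductor, Submodule.mem_colon, Subalgebra.mem_toSubmodule,
    Algebra.mem_bot, Set.mem_range, Algebra.smul_def, SetLike.mem_coe]

theorem Subalgebra.exists_algebraMap_eq_mul_of_mem_conductor [Algebra A K]
    {T : Subalgebra A K} {g : A} (hg : g ∈ T.conductor) (s : T) :
    ∃ a : A, algebraMap A T a = algebraMap A T g * s := by
  obtain ⟨a, ha⟩ := mem_conductor_iff.1 hg s s.2
  exact ⟨a, Subtype.ext ha⟩

theorem Ideal.exists_mem_forall_notMem_minimalPrimes [IsNoetherianRing B] (φ : A →+* B)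
    {I : Ideal A} (hI : ∀ p ∈ minimalPrimes B, ¬ I ≤ p.comap φ) :
    ∃ g ∈ I, ∀ p ∈ minimalPrimes B, φ g ∉ p := by
  by_contra! h
  have hcover : (I : Set A) ⊆ ⋃ p ∈ minimalPrimes B, (p.comap φ : Set A) := fun x hx ↦ by
    simpa using h x hx
  obtain ⟨p, hp, hle⟩ := (Ideal.subset_union_prime_finite
    (minimalPrimes.finite_of_isNoetherianRing B) ⊥ ⊥
    fun p hp _ _ ↦ have := hp.isPrime; Ideal.IsPrime.comap φ).1 hcover
  exact hI p hp hle

theorem mem_nonZeroDivisors_of_forall_notMem_minimalPrimes [IsReduced B] {x : B}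
    (hx : ∀ p ∈ minimalPrimes B, x ∉ p) : x ∈ B⁰ := by
  refine mem_nonZeroDivisors_iff_right.2 fun y hy ↦ ?_
  have hmem : y ∈ sInf (minimalPrimes B) := Ideal.mem_sInf.2 fun {p} hp ↦
    (hp.isPrime.mem_or_mem (hy ▸ p.zero_mem)).resolve_right (hx p hp)
  rw [minimalPrimes, Ideal.sInf_minimalPrimes] at hmem
  exact IsReduced.eq_zero y (mem_nilradical.1 hmem)

variable [Algebra A S] {g : A}

theorem exists_ringHom_comp_algebraMap_eq_of_isUnit (hinj : Injective (algebraMap A S))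
    (hg : ∀ s : S, ∃ a : A, algebraMap A S a = algebraMap A S g * s) (χ : A →+* L)
    (hχ : IsUnit (χ g)) : ∃ ψ : S →+* L, ψ.comp (algebraMap A S) = χ := by
  choose a ha using hg
  set v : L := ↑hχ.unit⁻¹
  have hv : χ g * v = 1 := hχ.mul_val_inv
  have a_one : a 1 = g := hinj <| by rw [ha, mul_one]
  have a_zero : a 0 = 0 := hinj <| by rw [ha, mul_zero, map_zero]
  have a_add s t : a (s + t) = a s + a t := hinj <| by rw [map_add, ha, ha, ha, mul_add]
  have a_mul s t : g * a (s * t) = a s * a t := hinj <| by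
    simp only [map_mul, ha]; ring
  have a_algebraMap c : a (algebraMap A S c) = g * c := hinj <| by rw [ha, map_mul]
  refine ⟨{ toFun s := χ (a s) * v
            map_one' := by rw [a_one, hv]
            map_mul' s t := by
              have := congrArg χ (a_mul s t)
              simp only [map_mul] at this
              linear_combination (-χ (a (s * t)) * v) * hv + v ^ 2 * this
            map_zero' := by rw [a_zero, map_zero, zero_mul]
            map_add' s t := by rw [a_add, map_add, add_mul] }, ?_⟩
  ext c
  simp only [RingHom.coe_comp, RingHom.coe_mk, MonoidHom.coe_mk, OneHom.coe_mk, comp_apply,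
    a_algebraMap, map_mul]
  linear_combination χ c * hv

theorem RingHom.ext_of_algebraMap_mul {R : Type*} [CommRing R]
    (hg : ∀ s : S, ∃ a : A, algebraMap A S a = algebraMap A S g * s) {ψ₁ ψ₂ : S →+* R}
    (h : ψ₁.comp (algebraMap A S) = ψ₂.comp (algebraMap A S))
    (hg₀ : ψ₁ (algebraMap A S g) ∈ R⁰) : ψ₁ = ψ₂ := by
  have hcomp c : ψ₁ (algebraMap A S c) = ψ₂ (algebraMap A S c) := RingHom.congr_fun h c
  ext s
  obtain ⟨a, ha⟩ := hg s
  refine (mul_cancel_left_mem_nonZeroDivisors hg₀).1 ?_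
  calc ψ₁ (algebraMap A S g) * ψ₁ s = ψ₁ (algebraMap A S a) := by rw [ha, map_mul]
    _ = ψ₂ (algebraMap A S a) := hcomp a
    _ = ψ₁ (algebraMap A S g) * ψ₂ s := by rw [ha, map_mul, hcomp]

theorem exists_ringHom_comp_algebraMap_eq_of_isIntegrallyClosedIn [Algebra.IsIntegral A S]
    [Algebra B L] [IsIntegrallyClosedIn B L] (φ : A →+* B) (f : S →+* L)
    (hf : f.comp (algebraMap A S) = (algebraMap B L).comp φ) :
    ∃ ψ : S →+* B, ψ.comp (algebraMap A S) = φ := by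
  have hinj := IsIntegralClosure.algebraMap_injective B B L
  have hint s : IsIntegral B (f s) :=
    (Algebra.IsIntegral.isIntegral s).map_of_comp_eq φ f hf.symm
  choose b hb using fun s ↦ IsIntegrallyClosedIn.isIntegral_iff.1 (hint s)
  let ψ : S →+* B :=
    { toFun := b
      map_one' := hinj <| by simp [hb]
      map_mul' s t := hinj <| by simp [hb]
      map_zero' := hinj <| by simp [hb]
      map_add' s t := hinj <| by simp [hb] }
  refine ⟨ψ, (RingHom.cancel_left hinj).1 ?_⟩
  rw [← hf]
  ext c
  exact hb _

end

theorem stmt_1_general {A B : Type*} [CommRing A]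
    [CommRing B] [IsNoetherianRing B] [IsReduced B]
    (φ : A →+* B)
    (hBic : integralClosure B (Localization (nonZeroDivisors B)) = ⊥)
    (hcond : ∀ p ∈ minimalPrimes B,
      ¬ ({g : A | ∀ h ∈ integralClosure A (Localization (nonZeroDivisors A)),
            ∃ a : A, algebraMap A (Localization (nonZeroDivisors A)) a =
              algebraMap A (Localization (nonZeroDivisors A)) g * h} ⊆ φ ⁻¹' (p : Set B))) :
    ∃! ψ : (integralClosure A (Localization (nonZeroDivisors A))) →+* B,
      ψ.comp (algebraMap A (integralClosure A (Localization (nonZeroDivisors A)))) = φ := by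
  set K := Localization A⁰
  set L := Localization B⁰
  set Abar := integralClosure A K
  have : IsIntegrallyClosedIn B L :=
    (IsIntegrallyClosedIn.integralClosure_eq_bot_iff L (IsFractionRing.injective B L)).1 hBic
  obtain ⟨g, hgC, hg⟩ := Ideal.exists_mem_forall_notMem_minimalPrimes φ (I := Abar.conductor)
    fun p hp hle ↦ hcond p hp fun x hx ↦ hle (Subalgebra.mem_conductor_iff.2 hx)
  have hgB : φ g ∈ B⁰ := mem_nonZeroDivisors_of_forall_notMem_minimalPrimes hg
  have hgAbar := Abar.exists_algebraMap_eq_mul_of_mem_conductor hgC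
  have hinj : Injective (algebraMap A Abar) :=
    .of_comp (f := Abar.val) (IsFractionRing.injective A K)
  obtain ⟨f, hf⟩ := exists_ringHom_comp_algebraMap_eq_of_isUnit hinj hgAbar
    ((algebraMap B L).comp φ) (IsLocalization.map_units L ⟨φ g, hgB⟩)
  obtain ⟨ψ, hψ⟩ := exists_ringHom_comp_algebraMap_eq_of_isIntegrallyClosedIn φ f hf
  refine ⟨ψ, hψ, fun ψ' hψ' ↦ RingHom.ext_of_algebraMap_mul hgAbar (hψ'.trans hψ.symm) ?_⟩
  rwa [← RingHom.comp_apply, hψ']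

/-- Universal property of the normalization (algebraic version): let `φ : A → B` with `B`
reduced Noetherian and integrally closed in its total ring of fractions.  If the conductor
of `A` in its integral closure `Ā ⊆ tot A` is not contained in `φ⁻¹ p` for any minimal
prime `p` of `B`, then `φ` extends uniquely to `Ā → B`. -/
theorem stmt_1 {A B : Type*} [CommRing A] [IsNoetherianRing A]
    [CommRing B] [IsNoetherianRing B] [IsReduced B]
    (φ : A →+* B)
    (hBic : integralClosure B (Localization (nonZeroDivisors B)) = ⊥)
    (hcond : ∀ p ∈ minimalPrimes B,
      ¬ ({g : A | ∀ h ∈ integralClosure A (Localization (nonZeroDivisors A)),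
            ∃ a : A, algebraMap A (Localization (nonZeroDivisors A)) a =
              algebraMap A (Localization (nonZeroDivisors A)) g * h} ⊆ φ ⁻¹' (p : Set B))) :
    ∃! ψ : (integralClosure A (Localization (nonZeroDivisors A))) →+* B,
      ψ.comp (algebraMap A (integralClosure A (Localization (nonZeroDivisors A)))) = φ :=
  stmt_1_general φ hBic hcond
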